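/- Let P₁(q) = 3q² − 2q³ and let π be any probability measure on [0,1] with mean μ = ∫ q dπ. Then ∫ P₁(q) dπ(q) ≥ L₁^one(μ) and ∫ P₁(q) dπ(q) ≤ U₁^one(μ), where L₁^one(μ) = P₁(μ) for μ ≤ 1/4 and L₁^one(μ) = (9μ−1)/8 for μ ≥ 1/4, and U₁^one(μ) = 9μ/8 for μ ≤ 3/4 and U₁^one(μ) = P₁(μ) for μ ≥ 3/4. Both bounds are sharp: the linear lower branch is attained by laws supported on {1/4, 1} and the linear upper branch by laws supported on {0, 3/4}. In particular L₁^one(μ) ≤ μ for every μ ∈ (0,1). -/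

import Mathlib

/-!
Every piece of both envelopes is a tangent line of `P₁`: writing `T_c` for the tangent at `c`,
`L₁^one(μ) = T_{min μ (1/4)}(μ)` and `U₁^one(μ) = T_{max μ (3/4)}(μ)`, since `(9μ − 1)/8` is the
tangent at `1/4` and `9μ/8` the tangent at `3/4`. The identity
`P₁(q) − T_c(q) = (q − c)² (3 − 2q − 4c)` shows that on `[0,1]` the tangent lies below `P₁`
when `c ≤ 1/4` and above it when `c ≥ 3/4`; integrating an affine bound against `π` gives the
envelope inequalities. The tangent at `1/4` touches `P₁` again at `1`, and the tangent at `3/4`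
at `0`, so two-point laws on these pairs attain the linear branches.
-/

open MeasureTheory

/-- The three-vote strict-majority success probability: `P₁(q) = 3q² − 2q³`. -/
def P1 (q : ℝ) : ℝ := 3 * q ^ 2 - 2 * q ^ 3

/-- The lower convex envelope of `P₁` on `[0,1]` (mean-only lower bound). -/
noncomputable def LoneEnv (μ : ℝ) : ℝ := if μ ≤ 1 / 4 then P1 μ else (9 * μ - 1) / 8

/-- The upper concave envelope of `P₁` on `[0,1]` (mean-only upper bound). -/
noncomputable def UoneEnv (μ : ℝ) : ℝ := if μ ≤ 3 / 4 then 9 * μ / 8 else P1 μ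

def tangentP1 (c q : ℝ) : ℝ := P1 c + 6 * c * (1 - c) * (q - c)

lemma P1_sub_tangentP1 (c q : ℝ) : P1 q - tangentP1 c q = (q - c) ^ 2 * (3 - 2 * q - 4 * c) := by
  simp only [tangentP1, P1]; ring

lemma tangentP1_le_P1 {c q : ℝ} (hc : c ≤ 1 / 4) (hq : q ≤ 1) : tangentP1 c q ≤ P1 q := by
  rw [← sub_nonneg, P1_sub_tangentP1]
  exact mul_nonneg (sq_nonneg _) (by linarith)

lemma P1_le_tangentP1 {c q : ℝ} (hc : 3 / 4 ≤ c) (hq : 0 ≤ q) : P1 q ≤ tangentP1 c q := by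
  rw [← sub_nonpos, P1_sub_tangentP1]
  exact mul_nonpos_of_nonneg_of_nonpos (sq_nonneg _) (by linarith)

lemma continuous_P1 : Continuous P1 := by
  unfold P1; fun_prop

lemma continuous_tangentP1 {c : ℝ} : Continuous (tangentP1 c) := by
  unfold tangentP1; fun_prop

lemma tangentP1_self (c : ℝ) : tangentP1 c c = P1 c := by
  simp [tangentP1]

lemma tangentP1_one_quarter (q : ℝ) : tangentP1 (1 / 4) q = (9 * q - 1) / 8 := by
  simp only [tangentP1, P1]; ring

lemma tangentP1_three_quarters (q : ℝ) : tangentP1 (3 / 4) q = 9 * q / 8 := by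
  simp only [tangentP1, P1]; ring

lemma LoneEnv_eq_tangentP1 (μ : ℝ) : LoneEnv μ = tangentP1 (min μ (1 / 4)) μ := by
  unfold LoneEnv
  split_ifs with h
  · rw [min_eq_left h, tangentP1_self]
  · rw [min_eq_right (le_of_not_ge h), tangentP1_one_quarter]

lemma UoneEnv_eq_tangentP1 (μ : ℝ) : UoneEnv μ = tangentP1 (max μ (3 / 4)) μ := by
  unfold UoneEnv
  split_ifs with h
  · rw [max_eq_right h, tangentP1_three_quarters]
  · rw [max_eq_left (le_of_not_ge h), tangentP1_self]

lemma LoneEnv_le_self {μ : ℝ} (h0 : 0 ≤ μ) (h1 : μ ≤ 1) : LoneEnv μ ≤ μ := by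
  unfold LoneEnv P1
  split_ifs
  · nlinarith [mul_nonneg (mul_nonneg h0 (sub_nonneg.2 h1)) (show (0 : ℝ) ≤ 1 - 2 * μ by linarith)]
  · linarith

lemma Continuous.integrable_of_measure_compl_eq_zero {X : Type*} [TopologicalSpace X]
    [T2Space X] [MeasurableSpace X] [OpensMeasurableSpace X] {π : Measure X}
    [IsFiniteMeasure π] {K : Set X} (hK : IsCompact K) (hπ : π Kᶜ = 0) {f : X → ℝ}
    (hf : Continuous f) : Integrable f π := by
  rw [← Measure.restrict_eq_self_of_ae_mem (mem_ae_iff.2 hπ)]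
  exact hf.continuousOn.integrableOn_compact hK

section UnitIntervalLaw

variable {π : Measure ℝ} [IsProbabilityMeasure π]

lemma integral_tangentP1 (c : ℝ) (hid : Integrable (fun q : ℝ => q) π) :
    ∫ q, tangentP1 c q ∂π = tangentP1 c (∫ q, q ∂π) := by
  unfold tangentP1
  have hshift : Integrable (fun q => q - c) π := hid.sub (integrable_const c)
  rw [integral_add (integrable_const _) (hshift.const_mul _), integral_const_mul,
    integral_sub hid (integrable_const c)]
  simp

variable (hπ : π (Set.Icc 0 1)ᶜ = 0)
include hπ

lemma integrable_of_unitInterval {f : ℝ → ℝ} (hf : Continuous f) : Integrable f π :=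
  hf.integrable_of_measure_compl_eq_zero isCompact_Icc hπ

lemma tangentP1_integral_le_integral_P1 {c : ℝ} (hc : c ≤ 1 / 4) :
    tangentP1 c (∫ q, q ∂π) ≤ ∫ q, P1 q ∂π := by
  rw [← integral_tangentP1 c (integrable_of_unitInterval hπ continuous_id)]
  refine integral_mono_ae (integrable_of_unitInterval hπ continuous_tangentP1)
    (integrable_of_unitInterval hπ continuous_P1) ?_
  filter_upwards [mem_ae_iff.2 hπ] with q hq using tangentP1_le_P1 hc hq.2

lemma integral_P1_le_tangentP1_integral {c : ℝ} (hc : 3 / 4 ≤ c) :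
    ∫ q, P1 q ∂π ≤ tangentP1 c (∫ q, q ∂π) := by
  rw [← integral_tangentP1 c (integrable_of_unitInterval hπ continuous_id)]
  refine integral_mono_ae (integrable_of_unitInterval hπ continuous_P1)
    (integrable_of_unitInterval hπ continuous_tangentP1) ?_
  filter_upwards [mem_ae_iff.2 hπ] with q hq using P1_le_tangentP1 hc hq.1

end UnitIntervalLaw

noncomputable def twoPoint (x y t : ℝ) : Measure ℝ :=
  ENNReal.ofReal (1 - t) • Measure.dirac x + ENNReal.ofReal t • Measure.dirac y

lemma isProbabilityMeasure_twoPoint (x y : ℝ) {t : ℝ} (ht0 : 0 ≤ t) (ht1 : t ≤ 1) :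
    IsProbabilityMeasure (twoPoint x y t) := by
  constructor
  simp [twoPoint, ← ENNReal.ofReal_add (sub_nonneg.2 ht1) ht0]

lemma twoPoint_compl_eq_zero (x y t : ℝ) : twoPoint x y t {x, y}ᶜ = 0 := by
  simp [twoPoint]

lemma integral_twoPoint (x y : ℝ) {t : ℝ} (ht0 : 0 ≤ t) (ht1 : t ≤ 1) (f : ℝ → ℝ) :
    ∫ q, f q ∂twoPoint x y t = (1 - t) * f x + t * f y := by
  have hint (a : ℝ) : Integrable f (Measure.dirac a) := integrable_dirac enorm_lt_top
  rw [twoPoint, integral_add_measure ((hint x).smul_measure ENNReal.ofReal_ne_top)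
      ((hint y).smul_measure ENNReal.ofReal_ne_top), integral_smul_measure,
    integral_smul_measure, integral_dirac, integral_dirac,
    ENNReal.toReal_ofReal (sub_nonneg.2 ht1), ENNReal.toReal_ofReal ht0, smul_eq_mul, smul_eq_mul]

lemma exists_twoPoint_integral_P1_eq_tangentP1 {c x y μ : ℝ} (hxy : x < y)
    (hx : P1 x = tangentP1 c x) (hy : P1 y = tangentP1 c y) (hxμ : x ≤ μ) (hμy : μ ≤ y) :
    ∃ π : Measure ℝ, IsProbabilityMeasure π ∧ π {x, y}ᶜ = 0 ∧
      ∫ q, q ∂π = μ ∧ ∫ q, P1 q ∂π = tangentP1 c μ := by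
  set t := (μ - x) / (y - x)
  have hyx : 0 < y - x := sub_pos.2 hxy
  have ht0 : 0 ≤ t := div_nonneg (sub_nonneg.2 hxμ) hyx.le
  have ht1 : t ≤ 1 := (div_le_one hyx).2 (by linarith)
  have hmean : ∫ q, q ∂twoPoint x y t = μ := by
    rw [integral_twoPoint x y ht0 ht1]
    linear_combination div_mul_cancel₀ (μ - x) hyx.ne'
  refine ⟨twoPoint x y t, isProbabilityMeasure_twoPoint x y ht0 ht1,
    twoPoint_compl_eq_zero x y t, hmean, ?_⟩
  rw [← hmean, integral_twoPoint x y ht0 ht1, integral_twoPoint x y ht0 ht1, hx, hy]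
  simp only [tangentP1]
  ring

/-- **Mean-only three-vote envelope.** For every probability measure `π` on `[0,1]` with
mean `μ`, `L₁^one(μ) ≤ ∫ P₁ dπ ≤ U₁^one(μ)`.  Both bounds are sharp: the linear lower
branch is attained by laws supported on `{1/4, 1}`, and the linear upper branch by laws
supported on `{0, 3/4}`.  In particular `L₁^one(μ) ≤ μ` for every `μ ∈ (0,1)`. -/
theorem mean_only_envelope :
    (∀ (μ : ℝ) (π : Measure ℝ), IsProbabilityMeasure π →
      π ((Set.Icc (0 : ℝ) 1)ᶜ) = 0 → (∫ q, q ∂π) = μ →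
      LoneEnv μ ≤ (∫ q, P1 q ∂π) ∧ (∫ q, P1 q ∂π) ≤ UoneEnv μ) ∧
    (∀ μ : ℝ, 1 / 4 ≤ μ → μ ≤ 1 →
      ∃ π : Measure ℝ, IsProbabilityMeasure π ∧ π (({1 / 4, 1} : Set ℝ)ᶜ) = 0 ∧
        (∫ q, q ∂π) = μ ∧ (∫ q, P1 q ∂π) = (9 * μ - 1) / 8) ∧
    (∀ μ : ℝ, 0 ≤ μ → μ ≤ 3 / 4 →
      ∃ π : Measure ℝ, IsProbabilityMeasure π ∧ π (({0, 3 / 4} : Set ℝ)ᶜ) = 0 ∧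
        (∫ q, q ∂π) = μ ∧ (∫ q, P1 q ∂π) = 9 * μ / 8) ∧
    (∀ μ : ℝ, 0 < μ → μ < 1 → LoneEnv μ ≤ μ) := by
  refine ⟨?_, ?_, ?_, fun μ h0 h1 => LoneEnv_le_self h0.le h1.le⟩
  · rintro μ π _ hπ rfl
    rw [LoneEnv_eq_tangentP1, UoneEnv_eq_tangentP1]
    exact ⟨tangentP1_integral_le_integral_P1 hπ (min_le_right _ _),
      integral_P1_le_tangentP1_integral hπ (le_max_right _ _)⟩
  · intro μ h1 h2
    simpa only [tangentP1_one_quarter] using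
      exists_twoPoint_integral_P1_eq_tangentP1 (c := 1 / 4) (by norm_num)
        (tangentP1_self _).symm (by norm_num [P1, tangentP1]) h1 h2
  · intro μ h0 h1
    simpa only [tangentP1_three_quarters] using
      exists_twoPoint_integral_P1_eq_tangentP1 (c := 3 / 4) (by norm_num)
        (by norm_num [P1, tangentP1]) (tangentP1_self _).symm h0 h1
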